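/- Let A be a real M×N matrix with restricted isometry constants δ_m(A), and assume δ_k(A) < 1. Let x ∈ ℝ^N be s-sparse, e ∈ ℝ^M, λ > 0, let T be an index set with |T| = k, let v ∈ ℝ^N be supported on T, and let μ ∈ ℝ^N be the vector supported on T defined by μ = v + λ⁻¹·[A*(Ax + e − Av)]_T. Then ‖μ − x‖₂ ≤ (1 + (1+δ_k(A))·√(1+δ_{s+k}(A)) / (λ·√(1−δ_k(A)))) · ‖x − v‖₂ + ((1+δ_k(A)) / (λ·√(1−δ_k(A)))) · ‖e‖₂. -/

import Mathlib

open Matrix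

/-- The Euclidean (ℓ²) norm of a vector in ℝⁿ. -/
noncomputable def norm2 {n : ℕ} (x : Fin n → ℝ) : ℝ := Real.sqrt (∑ i, x i ^ 2)

/-- `x` is `s`-sparse: it has at most `s` nonzero entries. -/
def sparse {n : ℕ} (s : ℕ) (x : Fin n → ℝ) : Prop :=
  (Finset.univ.filter fun i => x i ≠ 0).card ≤ s

/-- `restrict T x` is the vector agreeing with `x` on `T` and zero outside `T`. -/
def restrict {n : ℕ} (T : Finset (Fin n)) (x : Fin n → ℝ) : Fin n → ℝ :=
  fun i => if i ∈ T then x i else 0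

/-- The preconditioned matrix `(AAᴴ)^{-1/2} A`, where `(AAᴴ)^{-1/2}` is the inverse of the
positive semidefinite square root of `AAᴴ`. -/
noncomputable def precond {M N : ℕ} (A : Matrix (Fin M) (Fin N) ℝ) :
    Matrix (Fin M) (Fin N) ℝ :=
  ((Matrix.posSemidef_self_mul_conjTranspose A).1.eigenvectorUnitary.1 *
    diagonal ((↑) ∘ (√·) ∘ (Matrix.posSemidef_self_mul_conjTranspose A).1.eigenvalues) *
    (star (Matrix.posSemidef_self_mul_conjTranspose A).1.eigenvectorUnitary :
      Matrix (Fin M) (Fin M) ℝ))⁻¹ * A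

/-- The preconditioned restricted isometry constant `γ_s(A)`: the smallest `γ ≥ 0` such that
`(1-γ)‖x‖₂² ≤ ‖(AAᴴ)^{-1/2}Ax‖₂²` for all `s`-sparse `x`. -/
noncomputable def pripConst {M N : ℕ} (A : Matrix (Fin M) (Fin N) ℝ) (s : ℕ) : ℝ :=
  sInf {γ : ℝ | 0 ≤ γ ∧ ∀ x : Fin N → ℝ, sparse s x →
    (1 - γ) * norm2 x ^ 2 ≤ norm2 ((precond A).mulVec x) ^ 2}

/-- The restricted isometry constant `δ_s(B)`: the smallest `δ ≥ 0` such that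
`(1-δ)‖x‖₂² ≤ ‖Bx‖₂² ≤ (1+δ)‖x‖₂²` for all `s`-sparse `x`. -/
noncomputable def ripConst {m n : ℕ} (B : Matrix (Fin m) (Fin n) ℝ) (s : ℕ) : ℝ :=
  sInf {δ : ℝ | 0 ≤ δ ∧ ∀ x : Fin n → ℝ, sparse s x →
    (1 - δ) * norm2 x ^ 2 ≤ norm2 (B.mulVec x) ^ 2 ∧
      norm2 (B.mulVec x) ^ 2 ≤ (1 + δ) * norm2 x ^ 2}

/-- `θ_t(A) = δ_t((AAᴴ)⁻¹A)`. -/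
noncomputable def thetaConst {M N : ℕ} (A : Matrix (Fin M) (Fin N) ℝ) (t : ℕ) : ℝ :=
  ripConst ((A * Aᴴ)⁻¹ * A) t

/-! With `u = [Aᴴ(A(x - v) + e)]_T` we have `μ - x = λ⁻¹ u - (x - v)`. As `u` is
`|T|`-sparse, `‖u‖² = ⟨Au, A(x - v) + e⟩ ≤ √(1 + δ_k) ‖u‖ ‖A(x - v) + e‖`, and `x - v` is
`(s + k)`-sparse, so `‖u‖ ≤ √(1 + δ_k) (√(1 + δ_{s+k}) ‖x - v‖ + ‖e‖)`.
Finally `√(1 + δ_k) ≤ (1 + δ_k) / √(1 - δ_k)`. -/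

section norm2

variable {n : ℕ}

lemma norm2_eq_norm (x : Fin n → ℝ) :
    norm2 x = ‖(WithLp.toLp 2 x : EuclideanSpace ℝ (Fin n))‖ := by
  simp [norm2, EuclideanSpace.norm_eq]

lemma norm2_nonneg (x : Fin n → ℝ) : 0 ≤ norm2 x := Real.sqrt_nonneg _

lemma norm2_sq (x : Fin n → ℝ) : norm2 x ^ 2 = x ⬝ᵥ x := by
  rw [norm2, Real.sq_sqrt (Finset.sum_nonneg fun i _ => sq_nonneg _)]
  simp [dotProduct, sq]

lemma norm2_add_le (x y : Fin n → ℝ) : norm2 (x + y) ≤ norm2 x + norm2 y := by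
  simpa only [norm2_eq_norm, WithLp.toLp_add] using norm_add_le _ _

lemma norm2_sub_le (x y : Fin n → ℝ) : norm2 (x - y) ≤ norm2 x + norm2 y := by
  simpa only [norm2_eq_norm, WithLp.toLp_sub] using norm_sub_le _ _

lemma norm2_smul (c : ℝ) (x : Fin n → ℝ) : norm2 (c • x) = |c| * norm2 x := by
  simp only [norm2_eq_norm, WithLp.toLp_smul, norm_smul, Real.norm_eq_abs]

lemma dotProduct_le_norm2_mul_norm2 (x y : Fin n → ℝ) : x ⬝ᵥ y ≤ norm2 x * norm2 y := by
  simpa [norm2_eq_norm, EuclideanSpace.inner_toLp_toLp, dotProduct_comm x y] using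
    real_inner_le_norm (WithLp.toLp 2 x : EuclideanSpace ℝ (Fin n)) (WithLp.toLp 2 y)

end norm2

section sparse

variable {n : ℕ}

lemma sparse_card_of_eq_zero_off {T : Finset (Fin n)} {v : Fin n → ℝ}
    (hv : ∀ i ∉ T, v i = 0) : sparse T.card v :=
  Finset.card_le_card fun i hi => by
    by_contra hiT
    exact (Finset.mem_filter.1 hi).2 (hv i hiT)

lemma sparse_restrict (T : Finset (Fin n)) (x : Fin n → ℝ) : sparse T.card (restrict T x) :=
  sparse_card_of_eq_zero_off fun _ hi => if_neg hi

lemma sparse.sub {s t : ℕ} {x y : Fin n → ℝ} (hx : sparse s x) (hy : sparse t y) :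
    sparse (s + t) (x - y) := by
  refine le_trans (Finset.card_le_card fun i hi => ?_) ((Finset.card_union_le _ _).trans
    (add_le_add hx hy))
  simp only [Finset.mem_filter, Finset.mem_univ, true_and, Finset.mem_union, Pi.sub_apply] at hi ⊢
  by_contra! h
  exact hi (by rw [h.1, h.2, sub_zero])

end sparse

section ripConst

variable {m n : ℕ}

lemma norm2_mulVec_sq_le_frobenius (B : Matrix (Fin m) (Fin n) ℝ) (x : Fin n → ℝ) :
    norm2 (B *ᵥ x) ^ 2 ≤ (∑ i, ∑ j, B i j ^ 2) * norm2 x ^ 2 := by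
  simp only [norm2, Real.sq_sqrt (Finset.sum_nonneg fun i _ => sq_nonneg _)]
  rw [Finset.sum_mul]
  exact Finset.sum_le_sum fun i _ => Finset.sum_mul_sq_le_sq_mul_sq Finset.univ (B i) x

lemma ripConst_mem (B : Matrix (Fin m) (Fin n) ℝ) (s : ℕ) :
    ripConst B s ∈ {δ : ℝ | 0 ≤ δ ∧ ∀ x : Fin n → ℝ, sparse s x →
      (1 - δ) * norm2 x ^ 2 ≤ norm2 (B *ᵥ x) ^ 2 ∧
        norm2 (B *ᵥ x) ^ 2 ≤ (1 + δ) * norm2 x ^ 2} := by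
  refine IsClosed.csInf_mem ?_ ?_ ⟨0, fun δ hδ => hδ.1⟩
  · simp only [Set.ofPred_and, Set.ofPred_forall]
    refine (isClosed_le continuous_const continuous_id).inter <|
      isClosed_iInter fun x => isClosed_iInter fun _ => ?_
    exact (isClosed_le (by fun_prop) continuous_const).inter
      (isClosed_le continuous_const (by fun_prop))
  · -- any `δ ≥ 1` gives the lower bound, and the squared Frobenius norm bounds `‖Bx‖² / ‖x‖²`
    have hF : 0 ≤ ∑ i, ∑ j, B i j ^ 2 := by positivity
    refine ⟨1 + ∑ i, ∑ j, B i j ^ 2, by positivity, fun x _ => ⟨?_, ?_⟩⟩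
    · nlinarith [sq_nonneg (norm2 x), sq_nonneg (norm2 (B *ᵥ x))]
    · nlinarith [norm2_mulVec_sq_le_frobenius B x, sq_nonneg (norm2 x)]

lemma ripConst_nonneg (B : Matrix (Fin m) (Fin n) ℝ) (s : ℕ) : 0 ≤ ripConst B s :=
  (ripConst_mem B s).1

lemma norm2_mulVec_le_of_sparse (B : Matrix (Fin m) (Fin n) ℝ) {s : ℕ} {x : Fin n → ℝ}
    (hx : sparse s x) : norm2 (B *ᵥ x) ≤ √(1 + ripConst B s) * norm2 x := by
  rw [← Real.sqrt_sq (norm2_nonneg (B *ᵥ x)), ← Real.sqrt_sq (norm2_nonneg x),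
    ← Real.sqrt_mul (by linarith [ripConst_nonneg B s])]
  exact Real.sqrt_le_sqrt ((ripConst_mem B s).2 x hx).2

end ripConst

lemma norm2_restrict_conjTranspose_mulVec_le {m n : ℕ} (A : Matrix (Fin m) (Fin n) ℝ)
    (T : Finset (Fin n)) (w : Fin m → ℝ) :
    norm2 (restrict T (Aᴴ *ᵥ w)) ≤ √(1 + ripConst A T.card) * norm2 w := by
  set u := restrict T (Aᴴ *ᵥ w)
  have hu : norm2 u ^ 2 ≤ √(1 + ripConst A T.card) * norm2 u * norm2 w :=
    calc norm2 u ^ 2 = u ⬝ᵥ (Aᴴ *ᵥ w) := by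
          rw [norm2_sq]
          refine Finset.sum_congr rfl fun i _ => ?_
          by_cases hi : i ∈ T <;> simp [u, restrict, hi]
      _ = (A *ᵥ u) ⬝ᵥ w := by
          rw [dotProduct_mulVec, conjTranspose_eq_transpose_of_trivial, vecMul_transpose]
      _ ≤ norm2 (A *ᵥ u) * norm2 w := dotProduct_le_norm2_mul_norm2 _ _
      _ ≤ √(1 + ripConst A T.card) * norm2 u * norm2 w :=
          mul_le_mul_of_nonneg_right (norm2_mulVec_le_of_sparse A (sparse_restrict T _))
            (norm2_nonneg w)
  rcases (norm2_nonneg u).eq_or_lt with h0 | hpos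
  · rw [← h0]; exact mul_nonneg (Real.sqrt_nonneg _) (norm2_nonneg w)
  · nlinarith

lemma sqrt_one_add_le_div_sqrt_one_sub {δ : ℝ} (h0 : 0 ≤ δ) (h1 : δ < 1) :
    √(1 + δ) ≤ (1 + δ) / √(1 - δ) := by
  rw [le_div_iff₀ (Real.sqrt_pos.2 (by linarith)), ← Real.sqrt_mul (by linarith)]
  calc √((1 + δ) * (1 - δ)) ≤ 1 := Real.sqrt_le_one.2 (by nlinarith)
    _ ≤ 1 + δ := by linarith

theorem stmt7 {M N : ℕ} (A : Matrix (Fin M) (Fin N) ℝ)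
    (s k : ℕ) (hδ : ripConst A k < 1)
    (x : Fin N → ℝ) (hx : sparse s x) (e : Fin M → ℝ)
    (lam : ℝ) (hlam : 0 < lam)
    (T : Finset (Fin N)) (hT : T.card = k)
    (v : Fin N → ℝ) (hv : ∀ i ∉ T, v i = 0)
    (μ : Fin N → ℝ)
    (hμ : μ = v + lam⁻¹ • restrict T (Aᴴ.mulVec (A.mulVec x + e - A.mulVec v))) :
    norm2 (μ - x) ≤
      (1 + (1 + ripConst A k) * Real.sqrt (1 + ripConst A (s + k)) /
        (lam * Real.sqrt (1 - ripConst A k))) * norm2 (x - v) +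
      (1 + ripConst A k) / (lam * Real.sqrt (1 - ripConst A k)) * norm2 e := by
  subst hT
  set δk := ripConst A T.card
  set δsk := ripConst A (s + T.card)
  set u := restrict T (Aᴴ *ᵥ (A *ᵥ (x - v) + e))
  have hμx : μ - x = lam⁻¹ • u - (x - v) := by
    rw [hμ, show A *ᵥ x + e - A *ᵥ v = A *ᵥ (x - v) + e by rw [mulVec_sub]; abel]
    abel
  have hAxv : norm2 (A *ᵥ (x - v)) ≤ √(1 + δsk) * norm2 (x - v) :=
    norm2_mulVec_le_of_sparse A (hx.sub (sparse_card_of_eq_zero_off hv))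
  have hu : norm2 u ≤ (1 + δk) / √(1 - δk) * (√(1 + δsk) * norm2 (x - v) + norm2 e) :=
    calc norm2 u ≤ √(1 + δk) * norm2 (A *ᵥ (x - v) + e) :=
          norm2_restrict_conjTranspose_mulVec_le A T _
      _ ≤ _ := mul_le_mul (sqrt_one_add_le_div_sqrt_one_sub (ripConst_nonneg A _) hδ)
          ((norm2_add_le _ _).trans (by linarith)) (norm2_nonneg _)
          (div_nonneg (by linarith [ripConst_nonneg A T.card]) (Real.sqrt_nonneg _))
  calc norm2 (μ - x) ≤ norm2 (lam⁻¹ • u) + norm2 (x - v) := hμx ▸ norm2_sub_le _ _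
    _ = lam⁻¹ * norm2 u + norm2 (x - v) := by rw [norm2_smul, abs_of_pos (inv_pos.2 hlam)]
    _ ≤ lam⁻¹ * ((1 + δk) / √(1 - δk) * (√(1 + δsk) * norm2 (x - v) + norm2 e)) +
        norm2 (x - v) := by gcongr
    _ = _ := by ring
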